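/- arXiv:2402.14684 — 4 statements merged into one kernel-verified Lean document; each statement's English description precedes it below -/
import Mathlib

section
/- For the exponentially weighted average (EWA) forecaster with learning rate η > 0 over K experts, if the loss function is convex in the prediction and takes values in [0,1], then for any horizon T ≥ 1 the regret with respect to the best fixed expert satisfies R_T ≤ log(K)/η + ηT/8. -/
/-!
The logarithm of the weight of the comparator expert `k` is a potential. It starts at `-log K`
and stays `≤ 0`. In each round it grows by `-η ℓ_{k,t}` minus the log-normaliser
`log Σ_j p_t(j) e^{-η ℓ_{j,t}}`, which Hoeffding's lemma bounds by `-η Σ_j p_t(j) ℓ_{j,t} + η²/8`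
and Jensen's inequality for the convex loss then by `-η ℓ_t + η²/8`. So `η R_T(k) - η² T / 8`
is at most `log K`.
-/

open Real Finset

theorem sum_mul_exp_mul_le_of_mem_Icc {ι : Type*} [Fintype ι] {p x : ι → ℝ}
    (hp : ∀ i, 0 ≤ p i) (hp1 : ∑ i, p i = 1) {a b : ℝ} (hx : ∀ i, x i ∈ Set.Icc a b) (t : ℝ) :
    ∑ i, p i * exp (t * x i) ≤ exp (t * ∑ i, p i * x i + (b - a) ^ 2 * t ^ 2 / 8) := by
  let _ : MeasurableSpace ι := ⊤
  let P : PMF ι := PMF.ofFintype (fun i => ENNReal.ofReal (p i)) (by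
    rw [← ENNReal.ofReal_sum_of_nonneg fun i _ => hp i, hp1, ENNReal.ofReal_one])
  have hP : ∀ f : ι → ℝ, ∫ i, f i ∂P.toMeasure = ∑ i, p i * f i := fun f => by
    simp [PMF.integral_eq_sum, P, hp]
  have hoeffding := (ProbabilityTheory.hasSubgaussianMGF_of_mem_Icc (X := x) (μ := P.toMeasure)
    (measurable_of_countable x).aemeasurable (MeasureTheory.ae_of_all _ hx)).mgf_le t
  simp only [ProbabilityTheory.mgf, hP, mul_sub, exp_sub, ← mul_div_assoc, ← sum_div] at hoeffding
  rw [div_le_iff₀ (exp_pos _), ← exp_add] at hoeffding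
  refine hoeffding.trans_eq (congrArg exp ?_)
  push_cast
  rw [Real.norm_eq_abs, div_pow, sq_abs]
  ring

theorem ConvexOn.log_sum_mul_exp_neg_le {ι E : Type*} [Fintype ι] [AddCommGroup E] [Module ℝ E]
    {s : Set E} {f : E → ℝ} (hf : ConvexOn ℝ s f) {e : ι → E} (he : ∀ i, e i ∈ s)
    (hfe : ∀ i, f (e i) ∈ Set.Icc 0 1) {p : ι → ℝ} (hp : ∀ i, 0 ≤ p i) (hp1 : ∑ i, p i = 1)
    {η : ℝ} (hη : 0 ≤ η) :
    log (∑ i, p i * exp (-η * f (e i))) ≤ -η * f (∑ i, p i • e i) + η ^ 2 / 8 := by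
  obtain ⟨i, -, hpi⟩ : ∃ i ∈ univ, 0 < p i :=
    exists_lt_of_sum_lt (by simp [hp1] : ∑ i, (0 : ℝ) < ∑ i, p i)
  have hpos : 0 < ∑ i, p i * exp (-η * f (e i)) :=
    sum_pos' (fun i _ => by have := hp i; positivity) ⟨i, mem_univ i, by positivity⟩
  have jensen : f (∑ i, p i • e i) ≤ ∑ i, p i * f (e i) :=
    hf.map_sum_le (fun i _ => hp i) hp1 (fun i _ => he i)
  calc log (∑ i, p i * exp (-η * f (e i)))
      ≤ -η * ∑ i, p i * f (e i) + η ^ 2 / 8 := by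
        rw [log_le_iff_le_exp hpos]
        simpa using sum_mul_exp_mul_le_of_mem_Icc hp hp1 hfe (-η)
    _ ≤ -η * f (∑ i, p i • e i) + η ^ 2 / 8 := by nlinarith

theorem pos_and_sum_div_sum_mul_eq_one {ι : Type*} [Fintype ι] {p a : ι → ℝ}
    (hp : ∀ i, 0 < p i) (hp1 : ∑ i, p i = 1) (ha : ∀ i, 0 < a i) :
    (∀ i, 0 < p i * a i / ∑ j, p j * a j) ∧ ∑ i, p i * a i / ∑ j, p j * a j = 1 := by
  obtain ⟨i⟩ : Nonempty ι := by
    by_contra h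
    simp [not_nonempty_iff.1 h] at hp1
  have hZ : 0 < ∑ j, p j * a j :=
    sum_pos (fun j _ => mul_pos (hp j) (ha j)) ⟨i, mem_univ i⟩
  exact ⟨fun i => div_pos (mul_pos (hp i) (ha i)) hZ, by rw [← sum_div, div_self hZ.ne']⟩

section ExponentialWeights

variable {ι : Type*} [Fintype ι] {η : ℝ} {ℓ p : ℕ → ι → ℝ}

theorem ewa_pos_and_sum_eq_one (hp0 : ∀ i, 0 < p 0 i) (hp01 : ∑ i, p 0 i = 1)
    (hrec : ∀ t i, p (t + 1) i = p t i * exp (-η * ℓ t i) / ∑ j, p t j * exp (-η * ℓ t j))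
    (t : ℕ) : (∀ i, 0 < p t i) ∧ ∑ i, p t i = 1 := by
  induction t with
  | zero => exact ⟨hp0, hp01⟩
  | succ t ih =>
    simp only [hrec t]
    exact pos_and_sum_div_sum_mul_eq_one ih.1 ih.2 fun i => exp_pos _

theorem ewa_log_weight_succ
    (hrec : ∀ t i, p (t + 1) i = p t i * exp (-η * ℓ t i) / ∑ j, p t j * exp (-η * ℓ t j))
    (hp : ∀ t i, 0 < p t i) (t : ℕ) (i : ι) :
    log (p (t + 1) i) = log (p t i) - η * ℓ t i - log (∑ j, p t j * exp (-η * ℓ t j)) := by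
  have hZ : 0 < ∑ j, p t j * exp (-η * ℓ t j) :=
    sum_pos (fun j _ => mul_pos (hp t j) (exp_pos _)) ⟨i, mem_univ i⟩
  rw [hrec, log_div (mul_pos (hp t i) (exp_pos _)).ne' hZ.ne',
    log_mul (hp t i).ne' (exp_pos _).ne', log_exp]
  ring

end ExponentialWeights

theorem ewa_regret_bound_general
    (K T : ℕ)
    (η : ℝ) (hη : 0 < η)
    (E : Type*) [AddCommGroup E] [Module ℝ E]
    -- `L t` is the loss function at round `t`, as a function of the prediction
    (L : ℕ → E → ℝ)
    (hconv : ∀ t, ConvexOn ℝ Set.univ (L t))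
    (hrange : ∀ t e, L t e ∈ Set.Icc (0 : ℝ) 1)
    -- expert predictions
    (pred : Fin K → ℕ → E)
    -- EWA weights
    (p : ℕ → Fin K → ℝ)
    (hp0 : ∀ k, p 0 k = 1 / K)
    (hprec : ∀ t k, p (t + 1) k =
      p t k * Real.exp (-η * L t (pred k t)) /
        ∑ j, p t j * Real.exp (-η * L t (pred j t)))
    (k : Fin K) :
    ∑ t ∈ Finset.range T,
        (L t (∑ j, p t j • pred j t) - L t (pred k t))
      ≤ Real.log K / η + η * T / 8 := by
  have hK : (0 : ℝ) < K := Nat.cast_pos.2 k.pos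
  have hw := ewa_pos_and_sum_eq_one (ℓ := fun t j => L t (pred j t))
    (fun j => by rw [hp0]; positivity) (by simp [hp0, hK.ne']) hprec
  have hround : ∀ t, η * (L t (∑ j, p t j • pred j t) - L t (pred k t)) - η ^ 2 / 8 ≤
      log (p (t + 1) k) - log (p t k) := fun t => by
    have hmix := (hconv t).log_sum_mul_exp_neg_le (fun j => Set.mem_univ (pred j t))
      (fun j => hrange t _) (fun j => ((hw t).1 j).le) (hw t).2 hη.le
    rw [ewa_log_weight_succ hprec (fun t => (hw t).1) t k]
    linarith
  have hlast : log (p T k) ≤ 0 := log_nonpos ((hw T).1 k).le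
    ((hw T).2 ▸ single_le_sum (fun j _ => ((hw T).1 j).le) (mem_univ k))
  have htotal := (sum_le_sum fun t (_ : t ∈ range T) => hround t).trans_eq
    (sum_range_sub (fun t => log (p t k)) T)
  rw [sum_sub_distrib, ← mul_sum, sum_const, card_range, nsmul_eq_mul, hp0 k, one_div,
    log_inv] at htotal
  rw [div_add' _ _ _ hη.ne', le_div_iff₀ hη]
  linarith

/-- **EWA regret bound.** For the exponentially weighted average forecaster with
learning rate `η > 0` over `K` experts, if the loss function is convex in the
prediction and takes values in `[0,1]`, then for any horizon `T ≥ 1` the regret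
with respect to any fixed expert `k` satisfies `R_T(k) ≤ log K / η + η T / 8`. -/
theorem ewa_regret_bound
    (K T : ℕ) (hK : 0 < K) (hT : 1 ≤ T)
    (η : ℝ) (hη : 0 < η)
    (E : Type*) [AddCommGroup E] [Module ℝ E]
    -- `L t` is the loss function at round `t`, as a function of the prediction
    (L : ℕ → E → ℝ)
    (hconv : ∀ t, ConvexOn ℝ Set.univ (L t))
    (hrange : ∀ t e, L t e ∈ Set.Icc (0 : ℝ) 1)
    -- expert predictions
    (pred : Fin K → ℕ → E)
    -- EWA weights
    (p : ℕ → Fin K → ℝ)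
    (hp0 : ∀ k, p 0 k = 1 / K)
    (hprec : ∀ t k, p (t + 1) k =
      p t k * Real.exp (-η * L t (pred k t)) /
        ∑ j, p t j * Real.exp (-η * L t (pred j t)))
    (k : Fin K) :
    ∑ t ∈ Finset.range T,
        (L t (∑ j, p t j • pred j t) - L t (pred k t))
      ≤ Real.log K / η + η * T / 8 :=
  ewa_regret_bound_general K T η hη E L hconv hrange pred p hp0 hprec k
end

section
/- The Markov-Hedge algorithm with transition matrix M coincides with the EWA algorithm run over the (exponentially many) sequences of experts under the Markov-chain prior p_1(k_1,...,k_T) = π(k_1) M_{k_2|k_1} ⋯ M_{k_T|k_{T-1}}: at each round t, the marginal weight placed by the sequence-EWA forecaster on expert value k_t = k equals the weight p_t(k) maintained by Markov-Hedge. -/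
/-- Access the `s`-th element of a finite sequence `seq : Fin T → Fin K`
(for `s < T` this is just `seq s`). -/
def seqGet {K T : ℕ} (hT : 0 < T) (seq : Fin T → Fin K) (s : ℕ) : Fin K :=
  seq ⟨s % T, Nat.mod_lt s hT⟩

namespace MHaux

variable {K : ℕ}

noncomputable def fwd (v : Fin K → ℝ) (w : ℕ → Fin K → Fin K → ℝ) : ℕ → Fin K → ℝ
  | 0 => v
  | m + 1 => fun k => ∑ j, w (m + 1) k j * fwd v w m j

lemma seqGet_snoc_lt {n : ℕ} (g : Fin (n + 1) → Fin K) (x : Fin K) {s : ℕ} (hs : s ≤ n) :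
    seqGet (Nat.succ_pos (n + 1)) (Fin.snoc g x) s = seqGet (Nat.succ_pos n) g s := by
  unfold seqGet
  have h1 : s % (n + 2) = s := Nat.mod_eq_of_lt (by omega)
  have h2 : s % (n + 1) = s := Nat.mod_eq_of_lt (by omega)
  have he : (⟨s % (n + 2), Nat.mod_lt s (Nat.succ_pos (n + 1))⟩ : Fin (n + 2)) =
      Fin.castSucc ⟨s % (n + 1), Nat.mod_lt s (Nat.succ_pos n)⟩ := by
    apply Fin.ext; simp [h1, h2]
  rw [he, Fin.snoc_castSucc]

lemma seqGet_snoc_last {n : ℕ} (g : Fin (n + 1) → Fin K) (x : Fin K) :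
    seqGet (Nat.succ_pos (n + 1)) (Fin.snoc g x) (n + 1) = x := by
  unfold seqGet
  have he : (⟨(n + 1) % (n + 2), Nat.mod_lt (n + 1) (Nat.succ_pos (n + 1))⟩ : Fin (n + 2)) =
      Fin.last (n + 1) := by
    apply Fin.ext; simp [Nat.mod_eq_of_lt]
  rw [he, Fin.snoc_last]

lemma pathsum (v : Fin K → ℝ) (w : ℕ → Fin K → Fin K → ℝ) :
    ∀ (n : ℕ) (k : Fin K),
      (∑ seq : Fin (n + 1) → Fin K,
        if seqGet (Nat.succ_pos n) seq n = k then
          v (seqGet (Nat.succ_pos n) seq 0) *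
            ∏ s ∈ Finset.Ico 1 (n + 1),
              w s (seqGet (Nat.succ_pos n) seq s) (seqGet (Nat.succ_pos n) seq (s - 1))
        else 0) = fwd v w n k := by
  intro n
  induction n with
  | zero =>
    intro k
    rw [← Equiv.sum_comp (Equiv.funUnique (Fin 1) (Fin K)).symm]
    have : ∀ x : Fin K,
        (if seqGet (Nat.succ_pos 0) ((Equiv.funUnique (Fin 1) (Fin K)).symm x) 0 = k then
          v (seqGet (Nat.succ_pos 0) ((Equiv.funUnique (Fin 1) (Fin K)).symm x) 0) *
            ∏ s ∈ Finset.Ico 1 (0 + 1),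
              w s (seqGet (Nat.succ_pos 0) ((Equiv.funUnique (Fin 1) (Fin K)).symm x) s)
                (seqGet (Nat.succ_pos 0) ((Equiv.funUnique (Fin 1) (Fin K)).symm x) (s - 1))
        else 0) = if x = k then v x else 0 := by
      intro x
      have hx : seqGet (Nat.succ_pos 0) ((Equiv.funUnique (Fin 1) (Fin K)).symm x) 0 = x := rfl
      rw [hx]
      simp
    rw [Finset.sum_congr rfl fun x _ => this x, Finset.sum_ite_eq' Finset.univ k]
    simp [fwd]
  | succ n ih =>
    intro k
    rw [← Equiv.sum_comp (Fin.snocEquiv (fun _ => Fin K))]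
    rw [Fintype.sum_prod_type]
    have step : ∀ (x : Fin K) (g : Fin (n + 1) → Fin K),
        (if seqGet (Nat.succ_pos (n + 1)) (Fin.snocEquiv (fun _ => Fin K) (x, g)) (n + 1) = k then
          v (seqGet (Nat.succ_pos (n + 1)) (Fin.snocEquiv (fun _ => Fin K) (x, g)) 0) *
            ∏ s ∈ Finset.Ico 1 (n + 2),
              w s (seqGet (Nat.succ_pos (n + 1)) (Fin.snocEquiv (fun _ => Fin K) (x, g)) s)
                (seqGet (Nat.succ_pos (n + 1)) (Fin.snocEquiv (fun _ => Fin K) (x, g)) (s - 1))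
        else 0)
        = if x = k then
            (v (seqGet (Nat.succ_pos n) g 0) *
              ∏ s ∈ Finset.Ico 1 (n + 1),
                w s (seqGet (Nat.succ_pos n) g s) (seqGet (Nat.succ_pos n) g (s - 1))) *
            w (n + 1) x (seqGet (Nat.succ_pos n) g n)
          else 0 := by
      intro x g
      have hse : (Fin.snocEquiv (fun _ => Fin K) (x, g) : Fin (n + 2) → Fin K) = Fin.snoc g x := by
        funext i; simp [Fin.snocEquiv]
      rw [hse, seqGet_snoc_last, seqGet_snoc_lt g x (Nat.zero_le n),
        Finset.prod_Ico_succ_top (by omega : 1 ≤ n + 1)]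
      congr 1
      · rw [seqGet_snoc_last]
        have hn : (n + 1 : ℕ) - 1 = n := by omega
        rw [hn, seqGet_snoc_lt g x (le_refl n)]
        rw [Finset.prod_congr rfl (fun s hs => ?_)]
        · ring
        · have hs' := Finset.mem_Ico.mp hs
          rw [seqGet_snoc_lt g x (by omega), seqGet_snoc_lt g x (by omega)]
    rw [Finset.sum_congr rfl fun x _ => Finset.sum_congr rfl fun g _ => step x g]
    rw [Finset.sum_comm]
    have collapse : ∀ g : Fin (n + 1) → Fin K,
        (∑ x : Fin K, if x = k then
          (v (seqGet (Nat.succ_pos n) g 0) *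
            ∏ s ∈ Finset.Ico 1 (n + 1),
              w s (seqGet (Nat.succ_pos n) g s) (seqGet (Nat.succ_pos n) g (s - 1))) *
          w (n + 1) x (seqGet (Nat.succ_pos n) g n) else 0)
        = ∑ j : Fin K, w (n + 1) k j *
            (if seqGet (Nat.succ_pos n) g n = j then
              v (seqGet (Nat.succ_pos n) g 0) *
                ∏ s ∈ Finset.Ico 1 (n + 1),
                  w s (seqGet (Nat.succ_pos n) g s) (seqGet (Nat.succ_pos n) g (s - 1))
             else 0) := by
      intro g
      rw [Finset.sum_ite_eq' Finset.univ k]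
      simp only [Finset.mem_univ, if_true]
      simp only [mul_ite, mul_zero]
      rw [Finset.sum_ite_eq Finset.univ (seqGet (Nat.succ_pos n) g n)]
      simp only [Finset.mem_univ, if_true]
      ring
    rw [Finset.sum_congr rfl fun g _ => collapse g]
    rw [Finset.sum_comm]
    show (∑ j : Fin K, ∑ g : Fin (n + 1) → Fin K, _) = fwd v w (n + 1) k
    have : ∀ j : Fin K, (∑ g : Fin (n + 1) → Fin K,
        w (n + 1) k j * (if seqGet (Nat.succ_pos n) g n = j then
          v (seqGet (Nat.succ_pos n) g 0) *
            ∏ s ∈ Finset.Ico 1 (n + 1),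
              w s (seqGet (Nat.succ_pos n) g s) (seqGet (Nat.succ_pos n) g (s - 1))
         else 0)) = w (n + 1) k j * fwd v w n j := by
      intro j
      rw [← Finset.mul_sum, ih j]
    rw [Finset.sum_congr rfl fun j _ => this j]
    rfl

noncomputable def vInd (v : Fin K → ℝ) (t : ℕ) (k : Fin K) : Fin K → ℝ :=
  fun i => if t = 0 ∧ i ≠ k then 0 else v i

noncomputable def wInd (w : ℕ → Fin K → Fin K → ℝ) (t : ℕ) (k : Fin K) :
    ℕ → Fin K → Fin K → ℝ :=
  fun s j i => if s = t ∧ j ≠ k then 0 else w s j i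

lemma fwd_ind_lt (v : Fin K → ℝ) (w : ℕ → Fin K → Fin K → ℝ) (t : ℕ) (k : Fin K) :
    ∀ m, m < t → fwd (vInd v t k) (wInd w t k) m = fwd v w m := by
  intro m
  induction m with
  | zero =>
    intro h
    funext i
    show (if t = 0 ∧ i ≠ k then 0 else v i) = v i
    exact if_neg (fun hc => absurd hc.1 (by omega))
  | succ m ih =>
    intro h
    funext i
    show (∑ j, wInd w t k (m + 1) i j * fwd (vInd v t k) (wInd w t k) m j) = _
    rw [ih (by omega)]
    have hw : ∀ j, wInd w t k (m + 1) i j = w (m + 1) i j := by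
      intro j; exact if_neg (fun hc => absurd hc.1 (by omega))
    simp only [hw]
    rfl

lemma fwd_ind_at (v : Fin K → ℝ) (w : ℕ → Fin K → Fin K → ℝ) (t : ℕ) (k k' : Fin K) :
    fwd (vInd v t k) (wInd w t k) t k' = if k' = k then fwd v w t k' else 0 := by
  cases t with
  | zero =>
    show vInd v 0 k k' = _
    by_cases h : k' = k <;> simp [vInd, h, fwd]
  | succ m =>
    show (∑ j, wInd w (m + 1) k (m + 1) k' j * fwd (vInd v (m + 1) k) (wInd w (m + 1) k) m j) = _
    rw [fwd_ind_lt v w (m + 1) k m (by omega)]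
    by_cases h : k' = k
    · have hw : ∀ j, wInd w (m + 1) k (m + 1) k' j = w (m + 1) k' j := by
        intro j; exact if_neg (fun hc => hc.2 h)
      simp only [hw, if_pos h]
      rfl
    · have hw : ∀ j, wInd w (m + 1) k (m + 1) k' j = 0 := by
        intro j; simp [wInd, h]
      simp [hw, h]

lemma fwd_ind_sum (v : Fin K → ℝ) (w : ℕ → Fin K → Fin K → ℝ) (t : ℕ) (k : Fin K)
    (hcol : ∀ s, t < s → ∀ i, ∑ j, w s j i = 1) :
    ∀ m, t ≤ m → ∑ k', fwd (vInd v t k) (wInd w t k) m k' = fwd v w t k := by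
  intro m
  induction m with
  | zero =>
    intro h
    have ht : t = 0 := by omega
    subst ht
    simp only [fwd_ind_at]
    rw [Finset.sum_ite_eq' Finset.univ k]
    simp
  | succ m ih =>
    intro h
    rcases Nat.eq_or_lt_of_le h with heq | hlt
    · rw [← heq]
      simp only [fwd_ind_at]
      rw [Finset.sum_ite_eq' Finset.univ k]
      simp [← heq]
    · have hm : t ≤ m := by omega
      have hw : ∀ k' j, wInd w t k (m + 1) k' j = w (m + 1) k' j := by
        intro k' j; exact if_neg (fun hc => absurd hc.1 (by omega))
      show (∑ k', ∑ j, wInd w t k (m + 1) k' j * fwd (vInd v t k) (wInd w t k) m j) = _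
      simp only [hw]
      rw [Finset.sum_comm]
      have : ∀ j, (∑ k', w (m + 1) k' j * fwd (vInd v t k) (wInd w t k) m j)
          = fwd (vInd v t k) (wInd w t k) m j := by
        intro j
        rw [← Finset.sum_mul, hcol (m + 1) (by omega) j, one_mul]
      rw [Finset.sum_congr rfl fun j _ => this j, ih hm]

lemma ind_pointwise (v : Fin K → ℝ) (w : ℕ → Fin K → Fin K → ℝ) (t : ℕ) (k : Fin K)
    {n : ℕ} (ht : t ≤ n) (seq : Fin (n + 1) → Fin K) :
    (if seqGet (Nat.succ_pos n) seq t = k then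
      v (seqGet (Nat.succ_pos n) seq 0) *
        ∏ s ∈ Finset.Ico 1 (n + 1),
          w s (seqGet (Nat.succ_pos n) seq s) (seqGet (Nat.succ_pos n) seq (s - 1))
    else 0)
    = vInd v t k (seqGet (Nat.succ_pos n) seq 0) *
        ∏ s ∈ Finset.Ico 1 (n + 1),
          wInd w t k s (seqGet (Nat.succ_pos n) seq s) (seqGet (Nat.succ_pos n) seq (s - 1)) := by
  by_cases h : seqGet (Nat.succ_pos n) seq t = k
  · rw [if_pos h]
    have hv : vInd v t k (seqGet (Nat.succ_pos n) seq 0) = v (seqGet (Nat.succ_pos n) seq 0) := by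
      rcases Nat.eq_zero_or_pos t with ht0 | ht0
      · subst ht0; exact if_neg (fun hc => hc.2 h)
      · exact if_neg (fun hc => absurd hc.1 (by omega))
    rw [hv]
    congr 1
    refine Finset.prod_congr rfl fun s hs => ?_
    by_cases hst : s = t
    · subst hst; exact (if_neg (fun hc => hc.2 h)).symm
    · exact (if_neg (fun hc => hst hc.1)).symm
  · rw [if_neg h]
    symm
    cases t with
    | zero =>
      have hv0 : vInd v 0 k (seqGet (Nat.succ_pos n) seq 0) = 0 := if_pos ⟨rfl, h⟩
      rw [hv0, zero_mul]
    | succ m =>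
      have hmem : m + 1 ∈ Finset.Ico 1 (n + 1) := Finset.mem_Ico.mpr ⟨by omega, by omega⟩
      have hz : wInd w (m + 1) k (m + 1) (seqGet (Nat.succ_pos n) seq (m + 1))
          (seqGet (Nat.succ_pos n) seq (m + 1 - 1)) = 0 := if_pos ⟨rfl, h⟩
      rw [Finset.prod_eq_zero hmem hz, mul_zero]

noncomputable def G (π : Fin K → ℝ) (M : Fin K → Fin K → ℝ) (e : ℕ → Fin K → ℝ) :
    ℕ → Fin K → ℝ
  | 0 => π
  | m + 1 => fun i => ∑ j, M i j * (e m j * G π M e m j)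

lemma G_pos (hK : 0 < K) (π : Fin K → ℝ) (M : Fin K → Fin K → ℝ) (e : ℕ → Fin K → ℝ)
    (hπ : ∀ i, 0 < π i) (hM : ∀ i j, 0 < M i j) (he : ∀ s i, 0 < e s i) :
    ∀ m i, 0 < G π M e m i := by
  have : Nonempty (Fin K) := ⟨⟨0, hK⟩⟩
  intro m
  induction m with
  | zero => exact hπ
  | succ m ih =>
    intro i
    exact Finset.sum_pos (fun j _ => by
      have := ih j; have := hM i j; have := he m j; positivity) Finset.univ_nonempty

end MHaux


/-- **Markov-Hedge = EWA on sequences of experts under a Markov prior.**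
The Markov-Hedge algorithm with transition matrix `M` coincides with the EWA
algorithm run over the `K^T` sequences of experts under the Markov-chain prior
`p₁(k₁,…,k_T) = π(k₁) M_{k₂|k₁} ⋯ M_{k_T|k_{T-1}}`: at each round `t`, the
marginal weight placed by the sequence-EWA forecaster on expert value `k_t = k`
equals the weight `p_t(k)` maintained by Markov-Hedge. -/
theorem markov_hedge_eq_sequence_ewa_marginal
    (K T : ℕ) (hK : 0 < K) (hT : 0 < T)
    (η : ℝ) (hη : 0 < η)
    -- losses of each expert at each round
    (ℓ : Fin K → ℕ → ℝ)
    -- prior distribution and transition matrix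
    (π : Fin K → ℝ) (M : Fin K → Fin K → ℝ)
    (hπpos : ∀ j, 0 < π j) (hπsum : ∑ j, π j = 1)
    (hMpos : ∀ i j, 0 < M i j) (hMsum : ∀ j, ∑ i, M i j = 1)
    -- Markov-Hedge weights
    (p : ℕ → Fin K → ℝ)
    (hp0 : ∀ j, p 0 j = π j)
    (hprec : ∀ t i, p (t + 1) i = ∑ j, M i j *
      (p t j * Real.exp (-η * ℓ j t) / ∑ l, p t l * Real.exp (-η * ℓ l t)))
    -- Markov-chain prior over sequences of experts
    (prior : (Fin T → Fin K) → ℝ)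
    (hprior : ∀ seq, prior seq = π (seqGet hT seq 0) *
      ∏ s ∈ Finset.Ico 1 T, M (seqGet hT seq s) (seqGet hT seq (s - 1)))
    (t : ℕ) (ht : t < T) (k : Fin K) :
    p t k =
      (∑ seq ∈ Finset.univ.filter (fun seq : Fin T → Fin K => seqGet hT seq t = k),
          prior seq * Real.exp (-η * ∑ s ∈ Finset.range t, ℓ (seqGet hT seq s) s))
        / (∑ seq : Fin T → Fin K,
          prior seq * Real.exp (-η * ∑ s ∈ Finset.range t, ℓ (seqGet hT seq s) s)) := by
  
  obtain ⟨n, rfl⟩ : ∃ n, T = n + 1 := ⟨T - 1, by omega⟩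
  set e : ℕ → Fin K → ℝ := fun s i => Real.exp (-η * ℓ i s) with he
  set w : ℕ → Fin K → Fin K → ℝ :=
    fun s j i => M j i * (if s ≤ t then e (s - 1) i else 1) with hwdef
  have hee : ∀ (i : Fin K) (s : ℕ), Real.exp (-η * ℓ i s) = e s i := fun _ _ => rfl
  have hne : Nonempty (Fin K) := ⟨⟨0, hK⟩⟩
  have hepos : ∀ s i, 0 < e s i := fun s i => Real.exp_pos _
  have hGpos : ∀ m i, 0 < MHaux.G π M e m i := MHaux.G_pos hK π M e hπpos hMpos hepos
  have hGsum : ∀ m, 0 < ∑ l, MHaux.G π M e m l :=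
    fun m => Finset.sum_pos (fun l _ => hGpos m l) Finset.univ_nonempty
  -- Markov-Hedge weights are normalized forward messages
  have hpG : ∀ m i, p m i = MHaux.G π M e m i / ∑ l, MHaux.G π M e m l := by
    intro m
    induction m with
    | zero =>
      intro i
      rw [hp0 i]
      show π i = π i / ∑ l, π l
      rw [hπsum, div_one]
    | succ m ih =>
      intro i
      rw [hprec m i]
      simp only [hee]
      have hDpos : 0 < ∑ l, MHaux.G π M e m l * e m l :=
        Finset.sum_pos (fun l _ => mul_pos (hGpos m l) (hepos m l)) Finset.univ_nonempty
      have hS : (∑ l, p m l * e m l)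
          = (∑ l, MHaux.G π M e m l * e m l) / ∑ l, MHaux.G π M e m l := by
        rw [Finset.sum_div]
        refine Finset.sum_congr rfl fun l _ => ?_
        rw [ih l]
        ring
      have hterm : ∀ j, p m j * e m j / (∑ l, p m l * e m l)
          = MHaux.G π M e m j * e m j / ∑ l, MHaux.G π M e m l * e m l := by
        intro j
        rw [ih j, hS]
        have hSne := (hGsum m).ne'
        have hDne := hDpos.ne'
        field_simp
      simp only [hterm]
      have hsum1 : (∑ l, MHaux.G π M e (m + 1) l) = ∑ l, MHaux.G π M e m l * e m l := by
        show (∑ l, ∑ j, M l j * (e m j * MHaux.G π M e m j)) = _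
        rw [Finset.sum_comm]
        refine Finset.sum_congr rfl fun j _ => ?_
        rw [← Finset.sum_mul, hMsum j, one_mul]
        ring
      rw [hsum1]
      show _ = (∑ j, M i j * (e m j * MHaux.G π M e m j)) / ∑ l, MHaux.G π M e m l * e m l
      rw [Finset.sum_div]
      exact Finset.sum_congr rfl fun j _ => by ring
  -- forward recursion agrees with G up to time t
  have hkey : ∀ m, m ≤ t → MHaux.fwd π w m = MHaux.G π M e m := by
    intro m
    induction m with
    | zero => intro _; rfl
    | succ m ih =>
      intro h
      funext i
      show (∑ j, w (m + 1) i j * MHaux.fwd π w m j) = ∑ j, M i j * (e m j * MHaux.G π M e m j)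
      rw [ih (by omega)]
      refine Finset.sum_congr rfl fun j _ => ?_
      show M i j * (if m + 1 ≤ t then e (m + 1 - 1) j else 1) * MHaux.G π M e m j = _
      rw [if_pos h]
      have h1 : m + 1 - 1 = m := rfl
      rw [h1]
      ring
  -- pointwise rewriting of prior × exp-loss as a path product
  have hppw : ∀ seq : Fin (n + 1) → Fin K,
      prior seq * Real.exp (-η * ∑ s ∈ Finset.range t, ℓ (seqGet hT seq s) s)
      = π (seqGet hT seq 0) *
          ∏ s ∈ Finset.Ico 1 (n + 1), w s (seqGet hT seq s) (seqGet hT seq (s - 1)) := by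
    intro seq
    rw [hprior seq]
    have hexp : Real.exp (-η * ∑ s ∈ Finset.range t, ℓ (seqGet hT seq s) s)
        = ∏ s ∈ Finset.range t, e s (seqGet hT seq s) := by
      rw [Finset.mul_sum, Real.exp_sum]
    rw [hexp]
    have hsplit : (∏ s ∈ Finset.Ico 1 (n + 1), w s (seqGet hT seq s) (seqGet hT seq (s - 1)))
        = (∏ s ∈ Finset.Ico 1 (n + 1), M (seqGet hT seq s) (seqGet hT seq (s - 1))) *
          ∏ s ∈ Finset.Ico 1 (n + 1),
            (if s ≤ t then e (s - 1) (seqGet hT seq (s - 1)) else 1) := by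
      rw [← Finset.prod_mul_distrib]
    have hc : (∏ s ∈ Finset.Ico 1 (n + 1),
          (if s ≤ t then e (s - 1) (seqGet hT seq (s - 1)) else 1))
        = ∏ s ∈ Finset.range t, e s (seqGet hT seq s) := by
      rw [← Finset.prod_Ico_consecutive _ (by omega : 1 ≤ t + 1) (by omega : t + 1 ≤ n + 1)]
      have h2 : (∏ s ∈ Finset.Ico (t + 1) (n + 1),
          (if s ≤ t then e (s - 1) (seqGet hT seq (s - 1)) else 1)) = 1 :=
        Finset.prod_eq_one fun s hs => if_neg (by have := Finset.mem_Ico.mp hs; omega)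
      rw [h2, mul_one, Finset.prod_Ico_eq_prod_range]
      simp only [Nat.add_sub_cancel]
      refine Finset.prod_congr rfl fun s hs => ?_
      have hst : s < t := Finset.mem_range.mp hs
      rw [if_pos (by omega : 1 + s ≤ t)]
      have h1s : 1 + s - 1 = s := by omega
      rw [h1s]
    rw [hsplit, hc]
    ring
  -- numerator identity
  have hnum : ∀ k' : Fin K,
      (∑ seq ∈ Finset.univ.filter (fun seq : Fin (n + 1) → Fin K => seqGet hT seq t = k'),
        prior seq * Real.exp (-η * ∑ s ∈ Finset.range t, ℓ (seqGet hT seq s) s))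
      = MHaux.G π M e t k' := by
    intro k'
    rw [Finset.sum_filter]
    have step1 : ∀ seq : Fin (n + 1) → Fin K,
        (if seqGet hT seq t = k' then
          prior seq * Real.exp (-η * ∑ s ∈ Finset.range t, ℓ (seqGet hT seq s) s) else 0)
        = MHaux.vInd π t k' (seqGet hT seq 0) *
            ∏ s ∈ Finset.Ico 1 (n + 1),
              MHaux.wInd w t k' s (seqGet hT seq s) (seqGet hT seq (s - 1)) := by
      intro seq
      rw [hppw seq]
      exact MHaux.ind_pointwise π w t k' (by omega) seq
    rw [Finset.sum_congr rfl fun seq _ => step1 seq]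
    have step2 : ∀ seq : Fin (n + 1) → Fin K,
        MHaux.vInd π t k' (seqGet hT seq 0) *
            ∏ s ∈ Finset.Ico 1 (n + 1),
              MHaux.wInd w t k' s (seqGet hT seq s) (seqGet hT seq (s - 1))
        = ∑ k'' : Fin K, (if seqGet hT seq n = k'' then
            MHaux.vInd π t k' (seqGet hT seq 0) *
              ∏ s ∈ Finset.Ico 1 (n + 1),
                MHaux.wInd w t k' s (seqGet hT seq s) (seqGet hT seq (s - 1)) else 0) := by
      intro seq
      rw [Finset.sum_ite_eq Finset.univ (seqGet hT seq n)]
      simp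
    rw [Finset.sum_congr rfl fun seq _ => step2 seq, Finset.sum_comm]
    have step3 : ∀ k'' : Fin K,
        (∑ seq : Fin (n + 1) → Fin K, if seqGet hT seq n = k'' then
          MHaux.vInd π t k' (seqGet hT seq 0) *
            ∏ s ∈ Finset.Ico 1 (n + 1),
              MHaux.wInd w t k' s (seqGet hT seq s) (seqGet hT seq (s - 1)) else 0)
        = MHaux.fwd (MHaux.vInd π t k') (MHaux.wInd w t k') n k'' := fun k'' =>
      MHaux.pathsum (MHaux.vInd π t k') (MHaux.wInd w t k') n k''
    rw [Finset.sum_congr rfl fun k'' _ => step3 k'']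
    have hcol : ∀ s, t < s → ∀ i, (∑ j, w s j i) = 1 := by
      intro s hs i
      have : ∀ j, w s j i = M j i := by
        intro j
        show M j i * (if s ≤ t then e (s - 1) i else 1) = M j i
        rw [if_neg (by omega), mul_one]
      rw [Finset.sum_congr rfl fun j _ => this j]
      exact hMsum i
    rw [MHaux.fwd_ind_sum π w t k' hcol n (by omega), hkey t le_rfl]
  -- denominator identity
  have hden : (∑ seq : Fin (n + 1) → Fin K,
      prior seq * Real.exp (-η * ∑ s ∈ Finset.range t, ℓ (seqGet hT seq s) s))
      = ∑ k' : Fin K, MHaux.G π M e t k' := by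
    rw [← Finset.sum_fiberwise Finset.univ (fun seq : Fin (n + 1) → Fin K => seqGet hT seq t)
      (fun seq => prior seq * Real.exp (-η * ∑ s ∈ Finset.range t, ℓ (seqGet hT seq s) s))]
    exact Finset.sum_congr rfl fun k' _ => hnum k'
  rw [hnum k, hden, hpG t k]
end

section
/- Let B(α,η) = ((S+1)/η) log(K/α) + ((T−S)/η) log(1/(1−α)) + ηT/8 with K ≥ 2, 1 ≤ S ≤ T. Choosing α = S/T and η = √(8(S+1)log(KT/S)/T) (or any comparable tuning), one obtains B(α,η) = O(√(S T log T)), i.e., there is a universal constant C such that inf_{α∈(0,1), η>0} B(α,η) ≤ C √(S T log(KT)). -/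
/-!
Take `α = S/(2T) ≤ 1/2` (not `S/T`, which is `1` when `S = T`) and write `L = log (K T) ≥ log 2`. Then `log (K/α) ≤ log (2 K T) ≤ 2L`, and
`log (1/(1-α)) ≤ α/(1-α) ≤ 2α = S/T`, so the numerator of the first two terms of `B` is at most
`2(S+1)L + S ≤ 6 S L`. With `η = √(8 S L / T)` both `S L / η` and `η T / 8` equal `√(S L T / 8)`,
whence `B ≤ 7 √(S T L / 8) ≤ 3 √(S T L)`.
-/

open Real

noncomputable def fixedShareBound (K T S α η : ℝ) : ℝ :=
  ((S + 1) / η) * log (K / α) + ((T - S) / η) * log (1 / (1 - α)) + η * T / 8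

lemma fixedShareBound_eq (K T S α η : ℝ) :
    fixedShareBound K T S α η
      = ((S + 1) * log (K / α) + (T - S) * log (1 / (1 - α))) / η + η * T / 8 := by
  unfold fixedShareBound
  ring

lemma one_half_le_log {x : ℝ} (hx : 2 ≤ x) : 1 / 2 ≤ log x := by
  have := log_two_gt_d9
  have : log 2 ≤ log x := log_le_log two_pos hx
  linarith

lemma log_one_div_one_sub_le_two_mul {α : ℝ} (h0 : 0 ≤ α) (h : α ≤ 1 / 2) :
    log (1 / (1 - α)) ≤ 2 * α := by
  have hpos : 0 < 1 - α := by linarith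
  calc log (1 / (1 - α)) ≤ 1 / (1 - α) - 1 := log_le_sub_one_of_pos (by positivity)
    _ = α / (1 - α) := by field_simp; ring
    _ ≤ 2 * α := by rw [div_le_iff₀ hpos]; nlinarith

lemma sqrt_div_mul_self {a b : ℝ} (hb : 0 < b) : √(a / b) * b = √(a * b) := by
  rw [show a * b = a / b * b ^ 2 by field_simp, sqrt_mul' _ (sq_nonneg b), sqrt_sq hb.le]

lemma div_sqrt_div {a b : ℝ} (ha : 0 ≤ a) (hb : 0 < b) : a / √(a / b) = √(a * b) := by
  rcases ha.eq_or_lt with rfl | ha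
  · simp
  rw [← sqrt_sq ha.le, ← sqrt_div' _ (by positivity), sqrt_sq ha.le]
  congr 1
  field_simp

lemma log_div_div_two_mul_le {K T S : ℝ} (hK : 2 ≤ K) (hS : 1 ≤ S) (hST : S ≤ T) :
    log (K / (S / (2 * T))) ≤ 2 * log (K * T) := by
  have hT : 0 < T := by linarith
  calc log (K / (S / (2 * T))) ≤ log (2 * (K * T)) := by
        gcongr
        rw [div_div_eq_mul_div, div_le_iff₀ (by linarith)]
        nlinarith [mul_nonneg (mul_nonneg (by linarith : (0 : ℝ) ≤ K) hT.le) (sub_nonneg.2 hS)]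
    _ ≤ 2 * log (K * T) := by
        rw [log_mul two_ne_zero (by positivity), two_mul]
        gcongr
        nlinarith

lemma sub_mul_log_one_div_one_sub_le {T S : ℝ} (hS : 0 < S) (hST : S ≤ T) :
    (T - S) * log (1 / (1 - S / (2 * T))) ≤ S := by
  have hT : 0 < T := by linarith
  have hα : S / (2 * T) ≤ 1 / 2 := by rw [div_le_iff₀ (by positivity)]; linarith
  calc (T - S) * log (1 / (1 - S / (2 * T))) ≤ (T - S) * (2 * (S / (2 * T))) := by
        exact mul_le_mul_of_nonneg_left
          (log_one_div_one_sub_le_two_mul (by positivity) hα) (by linarith)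
    _ = S - S ^ 2 / T := by field_simp
    _ ≤ S := by linarith [div_nonneg (sq_nonneg S) hT.le]

lemma fixedShare_numerator_le {K T S : ℝ} (hK : 2 ≤ K) (hS : 1 ≤ S) (hST : S ≤ T) :
    (S + 1) * log (K / (S / (2 * T))) + (T - S) * log (1 / (1 - S / (2 * T)))
      ≤ 6 * (S * log (K * T)) := by
  have hL := one_half_le_log (x := K * T) (by nlinarith)
  have h₁ := mul_le_mul_of_nonneg_left (log_div_div_two_mul_le hK hS hST)
    (by linarith : 0 ≤ S + 1)
  have h₂ := sub_mul_log_one_div_one_sub_le (by linarith) hST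
  nlinarith

lemma seven_mul_sqrt_div_eight_le (x : ℝ) : 7 * √(x / 8) ≤ 3 * √x := by
  have h8 : 7 / 3 ≤ √8 := le_sqrt_of_sq_le (by norm_num)
  rw [sqrt_div' _ (by norm_num : (0 : ℝ) ≤ 8), mul_div_assoc', div_le_iff₀ (by positivity)]
  nlinarith [sqrt_nonneg x]

/-- **Tuning of the fixed-share bound.** Let
`B(α,η) = ((S+1)/η) log(K/α) + ((T−S)/η) log(1/(1−α)) + ηT/8` with `K ≥ 2` and
`1 ≤ S ≤ T`. There is a universal constant `C` such that, for a suitable choice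
of `α ∈ (0,1)` and `η > 0`,
`B(α,η) ≤ C √(S T log(K T))`; in particular
`inf_{α∈(0,1), η>0} B(α,η) = O(√(S T log T))`. -/
theorem fixed_share_bound_tuning :
    ∃ C : ℝ, 0 < C ∧ ∀ (K T S : ℕ), 2 ≤ K → 1 ≤ S → S ≤ T →
      ∃ (α η : ℝ), α ∈ Set.Ioo (0 : ℝ) 1 ∧ 0 < η ∧
        ((S + 1 : ℝ) / η) * Real.log (K / α)
            + ((T - S : ℝ) / η) * Real.log (1 / (1 - α))
            + η * T / 8
          ≤ C * Real.sqrt ((S : ℝ) * T * Real.log ((K : ℝ) * T)) := by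
  refine ⟨3, by norm_num, fun K T S hK hS hST => ?_⟩
  have hK : (2 : ℝ) ≤ K := by exact_mod_cast hK
  have hS : (1 : ℝ) ≤ S := by exact_mod_cast hS
  have hST : (S : ℝ) ≤ T := by exact_mod_cast hST
  have hT : (0 : ℝ) < T := by linarith
  have hL : 0 < log (K * T) := by linarith [one_half_le_log (x := K * T) (by nlinarith)]
  set a := (S : ℝ) * log (K * T)
  have ha : 0 < a := by positivity
  set η := √(a / (T / 8))
  refine ⟨S / (2 * T), η, ⟨by positivity, ?_⟩, by positivity, ?_⟩
  · rw [div_lt_one (by positivity)]; linarith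
  change fixedShareBound K T S _ η ≤ _
  calc fixedShareBound K T S _ η ≤ 6 * a / η + η * T / 8 := by
        rw [fixedShareBound_eq]
        gcongr
        exact fixedShare_numerator_le hK hS hST
    _ = 7 * √(S * T * log (K * T) / 8) := by
        rw [mul_div_assoc, div_sqrt_div ha.le (by positivity), mul_div_assoc,
          sqrt_div_mul_self (by positivity), show a * (T / 8) = S * T * log (K * T) / 8 by ring]
        ring
    _ ≤ 3 * √(S * T * log (K * T)) := seven_mul_sqrt_div_eight_le _
end

section
/- In the variational E-θ step, for any fixed distribution q_Z over Z_{1:t}, the minimizer q_θ* of the Kullback-Leibler divergence KL(q_θ × q_Z || p_{F_t}) over all distributions q_θ satisfies log q_θ*(θ_{1:t}) = Σ_{s=1}^t [log N(y_s | θ_s^T x_s, σ̄_s²) + log N(θ_s | θ_{s-1}, Q̄_{s-1})] + const, where σ̄_s^{-2} = Σ_k q_Z(Z_s=k) σ_k^{-2}, Q̄_{s-1}^{-1} = Σ_k q_Z(Z_{s-1}=k) Q_k^{-1}, θ_0 := θ̂_1 and Q̄_0 := P_1. -/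
open Matrix

/-- Scalar Gaussian density `N(z | m, v)`. -/
noncomputable def gaussPdf (m v z : ℝ) : ℝ :=
  Real.exp (-(z - m) ^ 2 / (2 * v)) / Real.sqrt (2 * Real.pi * v)

/-- Multivariate Gaussian density `N(z | m, Q)` on `ℝ^d`. -/
noncomputable def mvGaussPdf {d : ℕ} (m : Fin d → ℝ) (Q : Matrix (Fin d) (Fin d) ℝ)
    (z : Fin d → ℝ) : ℝ :=
  Real.exp (-((z - m) ⬝ᵥ Q⁻¹.mulVec (z - m)) / 2) /
    Real.sqrt ((2 * Real.pi) ^ d * Q.det)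

/-- Index of a time `s` among `Fin T` (equal to `s` whenever `s < T`). -/
def tIdx {T : ℕ} (hT : 0 < T) (s : ℕ) : Fin T := ⟨s % T, Nat.mod_lt s hT⟩

/-- The joint posterior density of the switching state-space model over a
horizon `t = r + 1` (up to the normalizing constant). -/
noncomputable def switchJoint {d K r : ℕ}
    (π : Fin K → ℝ) (M : Fin K → Fin K → ℝ)
    (σ2 : Fin K → ℝ) (Q : Fin K → Matrix (Fin d) (Fin d) ℝ)
    (θhat1 : Fin d → ℝ) (P1 : Matrix (Fin d) (Fin d) ℝ)
    (x : ℕ → Fin d → ℝ) (y : ℕ → ℝ)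
    (z : Fin (r + 1) → Fin K) (θ : Fin (r + 1) → (Fin d → ℝ)) : ℝ :=
  π (z (tIdx r.succ_pos 0)) * mvGaussPdf θhat1 P1 (θ (tIdx r.succ_pos 0))
    * (∏ s ∈ Finset.range (r + 1),
        gaussPdf (θ (tIdx r.succ_pos s) ⬝ᵥ x s) (σ2 (z (tIdx r.succ_pos s))) (y s))
    * (∏ s ∈ Finset.range r,
        mvGaussPdf (θ (tIdx r.succ_pos s)) (Q (z (tIdx r.succ_pos s)))
            (θ (tIdx r.succ_pos (s + 1)))
          * M (z (tIdx r.succ_pos (s + 1))) (z (tIdx r.succ_pos s)))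

/-!
The θ-free factors of `p_{F_t}` (the Markov prior of the regimes) only add a constant to
`E_{q_Z}[log p_{F_t}]`. Every other factor is a Gaussian whose regime dependence sits in its
(co)variance, and `log N(z | m, Σ) = -½ (z - m)ᵀ Σ⁻¹ (z - m) - ½ log det (2πΣ)` is affine in the
precision `Σ⁻¹`. Hence its `q_Z`-expectation depends on `q_Z` only through the marginal of `Z_s`,
and equals `log N(z | m, Σ̄)` with the averaged precision `Σ̄⁻¹ = ∑_k q_Z(Z_s = k) Σ_k⁻¹`, up to a
θ-free constant.
-/

open Finset
open Real (exp exp_pos exp_ne_zero log log_exp log_mul log_div log_prod sqrt sqrt_pos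
  sqrt_ne_zero')

lemma gaussPdf_pos (m : ℝ) {v : ℝ} (hv : 0 < v) (z : ℝ) : 0 < gaussPdf m v z :=
  div_pos (exp_pos _) (sqrt_pos.mpr (by positivity))

lemma log_gaussPdf (m : ℝ) {v : ℝ} (hv : 0 < v) (z : ℝ) :
    log (gaussPdf m v z) = -(v⁻¹ * (z - m) ^ 2) / 2 - log (sqrt (2 * Real.pi * v)) := by
  rw [gaussPdf, log_div (exp_ne_zero _) (sqrt_ne_zero'.mpr (by positivity)), log_exp]
  ring

lemma mvGaussPdf_pos {d : ℕ} (m : Fin d → ℝ) {Q : Matrix (Fin d) (Fin d) ℝ} (hQ : 0 < Q.det)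
    (z : Fin d → ℝ) : 0 < mvGaussPdf m Q z :=
  div_pos (exp_pos _) (sqrt_pos.mpr (by positivity))

lemma log_mvGaussPdf {d : ℕ} (m : Fin d → ℝ) {Q : Matrix (Fin d) (Fin d) ℝ} (hQ : 0 < Q.det)
    (z : Fin d → ℝ) :
    log (mvGaussPdf m Q z)
      = -((z - m) ⬝ᵥ Q⁻¹ *ᵥ (z - m)) / 2 - log (sqrt ((2 * Real.pi) ^ d * Q.det)) := by
  rw [mvGaussPdf, log_div (exp_ne_zero _) (sqrt_ne_zero'.mpr (by positivity)), log_exp]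

lemma Matrix.dotProduct_sum_smul_mulVec {n ι : Type*} [Fintype n] (s : Finset ι) (w : ι → ℝ)
    (A : ι → Matrix n n ℝ) (v : n → ℝ) :
    v ⬝ᵥ (∑ k ∈ s, w k • A k) *ᵥ v = ∑ k ∈ s, w k * (v ⬝ᵥ A k *ᵥ v) := by
  simp only [Matrix.sum_mulVec, dotProduct_sum, Matrix.smul_mulVec, dotProduct_smul,
    smul_eq_mul]

lemma Matrix.PosDef.sum_smul {n ι : Type*} [Fintype n] {s : Finset ι} {w : ι → ℝ}
    {A : ι → Matrix n n ℝ} (hA : ∀ k ∈ s, (A k).PosDef) (hw : ∀ k ∈ s, 0 ≤ w k)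
    (hpos : ∃ k ∈ s, 0 < w k) : (∑ k ∈ s, w k • A k).PosDef := by
  classical
  obtain ⟨k, hks, hk⟩ := hpos
  rw [← add_sum_erase s _ hks]
  refine ((hA k hks).smul hk).add_posSemidef (Matrix.posSemidef_sum _ fun j hj => ?_)
  exact (hA j (mem_of_mem_erase hj)).posSemidef.smul (hw j (mem_of_mem_erase hj))

lemma exists_sum_mul_log_gaussPdf {ι : Type*} (s : Finset ι) (w : ι → ℝ) {v : ι → ℝ}
    (hv : ∀ k ∈ s, 0 < v k) (hpos : 0 < ∑ k ∈ s, w k / v k) :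
    ∃ c, ∀ m z, ∑ k ∈ s, w k * log (gaussPdf m (v k) z)
      = log (gaussPdf m (∑ k ∈ s, w k / v k)⁻¹ z) + c := by
  refine ⟨log (sqrt (2 * Real.pi * (∑ k ∈ s, w k / v k)⁻¹))
    - ∑ k ∈ s, w k * log (sqrt (2 * Real.pi * v k)), fun m z => ?_⟩
  have hquad : ∀ q : ℝ, ∑ k ∈ s, w k * (-((v k)⁻¹ * q) / 2)
      = -((∑ k ∈ s, w k / v k) * q) / 2 := fun q => by
    rw [sum_mul, ← sum_neg_distrib, sum_div]
    exact sum_congr rfl fun k _ => by ring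
  rw [log_gaussPdf m (inv_pos.mpr hpos), inv_inv, sum_congr rfl fun k hk => by
    rw [log_gaussPdf m (hv k hk)]]
  simp only [mul_sub, sum_sub_distrib, hquad]
  ring

lemma exists_sum_mul_log_mvGaussPdf {ι : Type*} {d : ℕ} (s : Finset ι) (w : ι → ℝ)
    {Q : ι → Matrix (Fin d) (Fin d) ℝ} (hQ : ∀ k ∈ s, 0 < (Q k).det)
    (hpos : 0 < (∑ k ∈ s, w k • (Q k)⁻¹).det) :
    ∃ c, ∀ m z, ∑ k ∈ s, w k * log (mvGaussPdf m (Q k) z)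
      = log (mvGaussPdf m (∑ k ∈ s, w k • (Q k)⁻¹)⁻¹ z) + c := by
  have hS : 0 < (∑ k ∈ s, w k • (Q k)⁻¹)⁻¹.det := by
    rw [Matrix.det_nonsing_inv, Ring.inverse_eq_inv']; exact inv_pos.mpr hpos
  refine ⟨log (sqrt ((2 * Real.pi) ^ d * (∑ k ∈ s, w k • (Q k)⁻¹)⁻¹.det))
    - ∑ k ∈ s, w k * log (sqrt ((2 * Real.pi) ^ d * (Q k).det)), fun m z => ?_⟩
  rw [log_mvGaussPdf m hS, Matrix.nonsing_inv_nonsing_inv _ hpos.ne'.isUnit,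
    Matrix.dotProduct_sum_smul_mulVec, sum_congr rfl fun k hk => by
    rw [log_mvGaussPdf m (hQ k hk)]]
  simp only [mul_sub, sum_sub_distrib, mul_div_assoc', mul_neg, ← sum_div, ← sum_neg_distrib]
  ring

lemma Finset.sum_mul_comp_eq_sum_fiberwise {α β R : Type*} [Fintype α] [Fintype β]
    [DecidableEq β] [NonUnitalNonAssocSemiring R] (q : α → R) (φ : α → β) (g : β → R) :
    ∑ a, q a * g (φ a) = ∑ b, (∑ a with φ a = b, q a) * g b := by
  rw [← sum_fiberwise univ φ]
  refine sum_congr rfl fun b _ => ?_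
  rw [sum_mul]
  exact sum_congr rfl fun a ha => by rw [(mem_filter.1 ha).2]

lemma Finset.exists_pos_sum_fiberwise {α β : Type*} [Fintype α] [Fintype β] [DecidableEq β]
    {q : α → ℝ} (hq : ∀ a, 0 ≤ q a) (hpos : 0 < ∑ a, q a) (φ : α → β) :
    ∃ b ∈ univ, 0 < ∑ a with φ a = b, q a := by
  rw [← sum_fiberwise univ φ] at hpos
  exact (sum_pos_iff_of_nonneg fun b _ => sum_nonneg fun a _ => hq a).1 hpos

lemma Finset.sum_mul_sum_eq_sum_sum_mul {α ι R : Type*} [Fintype α] [NonUnitalNonAssocSemiring R]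
    (q : α → R) (s : Finset ι) (f : ι → α → R) :
    ∑ a, q a * ∑ i ∈ s, f i a = ∑ i ∈ s, ∑ a, q a * f i a := by
  simp only [mul_sum]
  exact sum_comm

noncomputable def logRegimePrior {K r : ℕ} (π : Fin K → ℝ) (M : Fin K → Fin K → ℝ)
    (z : Fin (r + 1) → Fin K) : ℝ :=
  log (π (z (tIdx r.succ_pos 0)))
    + ∑ s ∈ range r, log (M (z (tIdx r.succ_pos (s + 1))) (z (tIdx r.succ_pos s)))

lemma log_switchJoint {d K r : ℕ} {π : Fin K → ℝ} (hπ : ∀ k, π k ≠ 0)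
    {M : Fin K → Fin K → ℝ} (hM : ∀ i j, M i j ≠ 0) {σ2 : Fin K → ℝ} (hσ : ∀ k, 0 < σ2 k)
    {Q : Fin K → Matrix (Fin d) (Fin d) ℝ} (hQ : ∀ k, 0 < (Q k).det)
    (θhat1 : Fin d → ℝ) {P1 : Matrix (Fin d) (Fin d) ℝ} (hP1 : 0 < P1.det)
    (x : ℕ → Fin d → ℝ) (y : ℕ → ℝ) (z : Fin (r + 1) → Fin K) (θ : Fin (r + 1) → Fin d → ℝ) :
    log (switchJoint π M σ2 Q θhat1 P1 x y z θ)
      = logRegimePrior π M z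
        + log (mvGaussPdf θhat1 P1 (θ (tIdx r.succ_pos 0)))
        + ∑ s ∈ range (r + 1),
            log (gaussPdf (θ (tIdx r.succ_pos s) ⬝ᵥ x s) (σ2 (z (tIdx r.succ_pos s))) (y s))
        + ∑ s ∈ range r,
            log (mvGaussPdf (θ (tIdx r.succ_pos s)) (Q (z (tIdx r.succ_pos s)))
              (θ (tIdx r.succ_pos (s + 1)))) := by
  have h0 := mul_ne_zero (hπ (z (tIdx r.succ_pos 0)))
    (mvGaussPdf_pos θhat1 hP1 (θ (tIdx r.succ_pos 0))).ne'
  have hobs : ∀ s ∈ range (r + 1), gaussPdf (θ (tIdx r.succ_pos s) ⬝ᵥ x s)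
      (σ2 (z (tIdx r.succ_pos s))) (y s) ≠ 0 := fun s _ =>
    (gaussPdf_pos (θ (tIdx r.succ_pos s) ⬝ᵥ x s) (hσ (z (tIdx r.succ_pos s))) (y s)).ne'
  have htr : ∀ s ∈ range r, mvGaussPdf (θ (tIdx r.succ_pos s)) (Q (z (tIdx r.succ_pos s)))
      (θ (tIdx r.succ_pos (s + 1))) * M (z (tIdx r.succ_pos (s + 1))) (z (tIdx r.succ_pos s))
      ≠ 0 := fun s _ => mul_ne_zero (mvGaussPdf_pos _ (hQ _) _).ne' (hM _ _)
  rw [switchJoint, log_mul (mul_ne_zero h0 (prod_ne_zero_iff.2 hobs)) (prod_ne_zero_iff.2 htr),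
    log_mul h0 (prod_ne_zero_iff.2 hobs), log_mul (hπ _) (mvGaussPdf_pos θhat1 hP1 _).ne',
    log_prod hobs, log_prod htr, sum_congr rfl fun s _ =>
      log_mul (mvGaussPdf_pos _ (hQ _) _).ne' (hM _ _), sum_add_distrib, logRegimePrior]
  ring

lemma sum_mul_log_switchJoint {d K r : ℕ} {π : Fin K → ℝ} (hπ : ∀ k, π k ≠ 0)
    {M : Fin K → Fin K → ℝ} (hM : ∀ i j, M i j ≠ 0) {σ2 : Fin K → ℝ} (hσ : ∀ k, 0 < σ2 k)
    {Q : Fin K → Matrix (Fin d) (Fin d) ℝ} (hQ : ∀ k, 0 < (Q k).det)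
    (θhat1 : Fin d → ℝ) {P1 : Matrix (Fin d) (Fin d) ℝ} (hP1 : 0 < P1.det)
    (x : ℕ → Fin d → ℝ) (y : ℕ → ℝ) {q : (Fin (r + 1) → Fin K) → ℝ} (hq : ∑ z, q z = 1)
    (θ : Fin (r + 1) → Fin d → ℝ) :
    ∑ z, q z * log (switchJoint π M σ2 Q θhat1 P1 x y z θ)
      = ∑ z, q z * logRegimePrior π M z
        + log (mvGaussPdf θhat1 P1 (θ (tIdx r.succ_pos 0)))
        + ∑ s ∈ range (r + 1), ∑ z, q z *
            log (gaussPdf (θ (tIdx r.succ_pos s) ⬝ᵥ x s) (σ2 (z (tIdx r.succ_pos s))) (y s))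
        + ∑ s ∈ range r, ∑ z, q z *
            log (mvGaussPdf (θ (tIdx r.succ_pos s)) (Q (z (tIdx r.succ_pos s)))
              (θ (tIdx r.succ_pos (s + 1)))) := by
  simp only [log_switchJoint hπ hM hσ hQ θhat1 hP1, mul_add, sum_add_distrib,
    sum_mul_sum_eq_sum_sum_mul, ← sum_mul, hq, one_mul]

theorem vb_e_theta_step_general
    {d K r : ℕ}
    (π : Fin K → ℝ) (hπ : ∀ k, 0 < π k)
    (M : Fin K → Fin K → ℝ) (hM : ∀ i j, 0 < M i j)
    (σ2 : Fin K → ℝ) (hσ : ∀ k, 0 < σ2 k)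
    (Q : Fin K → Matrix (Fin d) (Fin d) ℝ) (hQ : ∀ k, (Q k).PosDef)
    (θhat1 : Fin d → ℝ) (P1 : Matrix (Fin d) (Fin d) ℝ) (hP1 : P1.PosDef)
    (x : ℕ → Fin d → ℝ) (y : ℕ → ℝ)
    -- the fixed distribution q_Z over regime trajectories
    (qZ : (Fin (r + 1) → Fin K) → ℝ)
    (hqZ : ∀ z, 0 ≤ qZ z) (hqZsum : ∑ z, qZ z = 1)
    -- marginals of q_Z at each time
    (marg : ℕ → Fin K → ℝ)
    (hmarg : ∀ s k, marg s k =
      ∑ z ∈ Finset.univ.filter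
        (fun z : Fin (r + 1) → Fin K => z (tIdx r.succ_pos s) = k), qZ z)
    -- averaged observation variances and state covariances
    (σbar2 : ℕ → ℝ) (hσbar : ∀ s, σbar2 s = (∑ k, marg s k / σ2 k)⁻¹)
    (Qbar : ℕ → Matrix (Fin d) (Fin d) ℝ)
    (hQbar : ∀ s, Qbar s = (∑ k, marg s k • (Q k)⁻¹)⁻¹) :
    ∃ c : ℝ, ∀ θ : Fin (r + 1) → (Fin d → ℝ),
      -- log q_θ*(θ) up to an additive constant, i.e. E_{q_Z}[log p_{F_t}(θ, Z)]:
      ∑ z : Fin (r + 1) → Fin K,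
          qZ z * Real.log (switchJoint π M σ2 Q θhat1 P1 x y z θ)
        = Real.log (mvGaussPdf θhat1 P1 (θ (tIdx r.succ_pos 0)))
          + (∑ s ∈ Finset.range (r + 1),
              Real.log (gaussPdf (θ (tIdx r.succ_pos s) ⬝ᵥ x s) (σbar2 s) (y s)))
          + (∑ s ∈ Finset.range r,
              Real.log (mvGaussPdf (θ (tIdx r.succ_pos s)) (Qbar s)
                (θ (tIdx r.succ_pos (s + 1)))))
          + c := by
  have hE : ∀ s (g : Fin K → ℝ), ∑ z, qZ z * g (z (tIdx r.succ_pos s)) = ∑ k, marg s k * g k :=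
    fun s g => by simp only [sum_mul_comp_eq_sum_fiberwise qZ, hmarg]
  have hmarg_nonneg : ∀ s k, 0 ≤ marg s k := fun s k => hmarg s k ▸ sum_nonneg fun z _ => hqZ z
  have hmarg_pos : ∀ s, ∃ k ∈ univ, 0 < marg s k := fun s => by
    simpa only [hmarg] using exists_pos_sum_fiberwise hqZ (hqZsum ▸ one_pos) _
  obtain ⟨cObs, hObs⟩ : ∃ c : ℕ → ℝ, ∀ s m,
      ∑ z, qZ z * log (gaussPdf m (σ2 (z (tIdx r.succ_pos s))) (y s))
        = log (gaussPdf m (σbar2 s) (y s)) + c s := by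
    choose c hc using fun s => exists_sum_mul_log_gaussPdf univ (marg s) (fun k _ => hσ k)
      (sum_pos' (fun k _ => div_nonneg (hmarg_nonneg s k) (hσ k).le)
        (by obtain ⟨k, hk, hpos⟩ := hmarg_pos s; exact ⟨k, hk, div_pos hpos (hσ k)⟩))
    exact ⟨c, fun s m => by rw [hE s fun k => log (gaussPdf m (σ2 k) (y s)), hσbar, hc]⟩
  obtain ⟨cTr, hTr⟩ : ∃ c : ℕ → ℝ, ∀ s u v,
      ∑ z, qZ z * log (mvGaussPdf u (Q (z (tIdx r.succ_pos s))) v)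
        = log (mvGaussPdf u (Qbar s) v) + c s := by
    choose c hc using fun s => exists_sum_mul_log_mvGaussPdf univ (marg s)
      (fun k _ => (hQ k).det_pos)
      (Matrix.PosDef.sum_smul (fun k _ => (hQ k).inv) (fun k _ => hmarg_nonneg s k)
        (hmarg_pos s)).det_pos
    exact ⟨c, fun s u v => by rw [hE s fun k => log (mvGaussPdf u (Q k) v), hQbar, hc]⟩
  refine ⟨∑ z, qZ z * logRegimePrior π M z + ∑ s ∈ range (r + 1), cObs s
    + ∑ s ∈ range r, cTr s, fun θ => ?_⟩
  rw [sum_mul_log_switchJoint (fun k => (hπ k).ne') (fun i j => (hM i j).ne') hσ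
    (fun k => (hQ k).det_pos) θhat1 hP1.det_pos x y hqZsum θ]
  simp only [hObs, hTr, sum_add_distrib]
  ring

/-- **The variational E-θ step.** For any fixed distribution `q_Z` over the
regime trajectories `Z_{1:t}`, the minimizer `q_θ*` of
`KL(q_θ × q_Z ‖ p_{F_t})` satisfies
`log q_θ*(θ_{1:t}) = E_{q_Z}[log p_{F_t}(θ_{1:t}, Z_{1:t})]
  = ∑_{s=1}^t [log N(y_s | θ_sᵀ x_s, σ̄_s²) + log N(θ_s | θ_{s-1}, Q̄_{s-1})] + const`,
where `σ̄_s⁻² = ∑_k q_Z(Z_s = k) σ_k⁻²`,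
`Q̄_{s-1}⁻¹ = ∑_k q_Z(Z_{s-1} = k) Q_k⁻¹`, `θ_0 := θ̂_1` and `Q̄_0 := P_1`
(here the horizon is `t = r + 1`). -/
theorem vb_e_theta_step
    {d K r : ℕ} (hK : 0 < K)
    (π : Fin K → ℝ) (hπ : ∀ k, 0 < π k) (hπsum : ∑ k, π k = 1)
    (M : Fin K → Fin K → ℝ) (hM : ∀ i j, 0 < M i j) (hMsum : ∀ j, ∑ i, M i j = 1)
    (σ2 : Fin K → ℝ) (hσ : ∀ k, 0 < σ2 k)
    (Q : Fin K → Matrix (Fin d) (Fin d) ℝ) (hQ : ∀ k, (Q k).PosDef)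
    (θhat1 : Fin d → ℝ) (P1 : Matrix (Fin d) (Fin d) ℝ) (hP1 : P1.PosDef)
    (x : ℕ → Fin d → ℝ) (y : ℕ → ℝ)
    -- the fixed distribution q_Z over regime trajectories
    (qZ : (Fin (r + 1) → Fin K) → ℝ)
    (hqZ : ∀ z, 0 ≤ qZ z) (hqZsum : ∑ z, qZ z = 1)
    -- marginals of q_Z at each time
    (marg : ℕ → Fin K → ℝ)
    (hmarg : ∀ s k, marg s k =
      ∑ z ∈ Finset.univ.filter
        (fun z : Fin (r + 1) → Fin K => z (tIdx r.succ_pos s) = k), qZ z)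
    -- averaged observation variances and state covariances
    (σbar2 : ℕ → ℝ) (hσbar : ∀ s, σbar2 s = (∑ k, marg s k / σ2 k)⁻¹)
    (Qbar : ℕ → Matrix (Fin d) (Fin d) ℝ)
    (hQbar : ∀ s, Qbar s = (∑ k, marg s k • (Q k)⁻¹)⁻¹) :
    ∃ c : ℝ, ∀ θ : Fin (r + 1) → (Fin d → ℝ),
      -- log q_θ*(θ) up to an additive constant, i.e. E_{q_Z}[log p_{F_t}(θ, Z)]:
      ∑ z : Fin (r + 1) → Fin K,
          qZ z * Real.log (switchJoint π M σ2 Q θhat1 P1 x y z θ)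
        = Real.log (mvGaussPdf θhat1 P1 (θ (tIdx r.succ_pos 0)))
          + (∑ s ∈ Finset.range (r + 1),
              Real.log (gaussPdf (θ (tIdx r.succ_pos s) ⬝ᵥ x s) (σbar2 s) (y s)))
          + (∑ s ∈ Finset.range r,
              Real.log (mvGaussPdf (θ (tIdx r.succ_pos s)) (Qbar s)
                (θ (tIdx r.succ_pos (s + 1)))))
          + c :=
  vb_e_theta_step_general π hπ M hM σ2 hσ Q hQ θhat1 P1 hP1 x y qZ hqZ hqZsum marg hmarg σbar2 hσbar
    Qbar hQbar
end
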